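/- arXiv:1709.03250 — 3 statements merged into one kernel-verified Lean document; each statement's English description precedes it below -/
import Mathlib

section
/- The impedance matrix D with entries d_{k,j} = −(1/Z_k)(1/Z_j)/S for j ≠ k and d_{k,k} = (1/Z_k)(S − 1/Z_k)/S, where S = 1/Z_l + ∑_m 1/Z_m, is positive definite (hence invertible). -/
/-!
With `aₖ = 1 / Zₖ`, the matrix is `D = diag a - S⁻¹ • a aᵀ`, so
`xᵀ D x = ∑ aₖ xₖ² - (∑ aₖ xₖ)² / S`. Cauchy–Schwarz with weights `aₖ` gives
`(∑ aₖ xₖ)² ≤ (∑ aₖ) (∑ aₖ xₖ²)`, and `S` exceeds `∑ aₖ` by `1 / Z_l > 0`,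
so the form is positive for `x ≠ 0`.
-/

open Matrix

section RankOnePerturbation

variable {ι : Type*} [Fintype ι] [DecidableEq ι]

theorem dotProduct_diagonal_sub_vecMulVec_mulVec (a x : ι → ℝ) (c : ℝ) :
    x ⬝ᵥ (diagonal a - c⁻¹ • vecMulVec a a) *ᵥ x =
      ∑ i, a i * x i ^ 2 - (∑ i, a i * x i) ^ 2 / c := by
  have hdiag : x ⬝ᵥ diagonal a *ᵥ x = ∑ i, a i * x i ^ 2 := by
    simp only [mulVec_diagonal, dotProduct]
    exact Finset.sum_congr rfl fun i _ => by ring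
  have hrank : x ⬝ᵥ vecMulVec a a *ᵥ x = (∑ i, a i * x i) ^ 2 := by
    rw [dotProduct_mulVec, vecMul_vecMulVec, smul_dotProduct, smul_eq_mul, sq,
      dotProduct_comm x a]
    rfl
  rw [sub_mulVec, dotProduct_sub, smul_mulVec, dotProduct_smul, hdiag, hrank, smul_eq_mul,
    inv_mul_eq_div]

theorem posDef_diagonal_sub_vecMulVec {a : ι → ℝ} (ha : ∀ i, 0 < a i) {c : ℝ}
    (hc : ∑ i, a i < c) : (diagonal a - c⁻¹ • vecMulVec a a).PosDef := by
  have hc_pos : 0 < c := (Finset.sum_nonneg fun i _ => (ha i).le).trans_lt hc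
  refine posDef_iff_dotProduct_mulVec.mpr ⟨?_, fun x hx => ?_⟩
  · exact (isHermitian_diagonal a).sub
      ((posSemidef_vecMulVec_self_star a).isHermitian.smul (IsSelfAdjoint.all _))
  rw [star_trivial, dotProduct_diagonal_sub_vecMulVec_mulVec, sub_pos, div_lt_iff₀ hc_pos]
  have cauchy_schwarz : (∑ i, a i * x i) ^ 2 ≤ (∑ i, a i) * ∑ i, a i * x i ^ 2 :=
    Finset.sum_sq_le_sum_mul_sum_of_sq_le_mul _ (fun i _ => (ha i).le)
      (fun i _ => mul_nonneg (ha i).le (sq_nonneg _)) (fun i _ => (by ring : _ = _).le)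
  have weighted_sq_pos : 0 < ∑ i, a i * x i ^ 2 := by
    obtain ⟨i, hi⟩ := Function.ne_iff.mp hx
    exact Finset.sum_pos' (fun j _ => mul_nonneg (ha j).le (sq_nonneg _))
      ⟨i, Finset.mem_univ i, mul_pos (ha i) (sq_pos_of_ne_zero hi)⟩
  calc (∑ i, a i * x i) ^ 2 ≤ (∑ i, a i) * ∑ i, a i * x i ^ 2 := cauchy_schwarz
    _ < c * ∑ i, a i * x i ^ 2 := mul_lt_mul_of_pos_right hc weighted_sq_pos
    _ = _ := mul_comm _ _

end RankOnePerturbation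

theorem impedance_matrix_posdef (n : ℕ) (Z : Fin n → ℝ) (Zl : ℝ)
    (hZ : ∀ k, 0 < Z k) (hZl : 0 < Zl)
    (S : ℝ) (hS : S = 1 / Zl + ∑ m, 1 / Z m)
    (D : Matrix (Fin n) (Fin n) ℝ)
    (hD : ∀ k j, D k j =
      if j = k then (1 / Z k) * (S - 1 / Z k) / S
      else -(1 / Z k) * (1 / Z j) / S) :
    D.PosDef ∧ IsUnit D.det := by
  set a : Fin n → ℝ := fun k => 1 / Z k
  have hS_pos : 0 < S := hS ▸ add_pos_of_pos_of_nonneg (by positivity)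
    (Finset.sum_nonneg fun m _ => (one_div_pos.mpr (hZ m)).le)
  have hD_eq : D = diagonal a - S⁻¹ • vecMulVec a a := by
    ext k j
    rw [hD, Matrix.sub_apply, Matrix.smul_apply, vecMulVec_apply, diagonal_apply, smul_eq_mul]
    rcases eq_or_ne j k with rfl | hjk
    · have := (hZ j).ne'
      simp only [if_true, a]
      field_simp
    · rw [if_neg hjk, if_neg hjk.symm]
      ring
  have hPD : D.PosDef := hD_eq ▸ posDef_diagonal_sub_vecMulVec (fun k => one_div_pos.mpr (hZ k))
    (by rw [hS]; linarith [one_div_pos.mpr hZl])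
  exact ⟨hPD, (isUnit_iff_isUnit_det D).mp hPD.isUnit⟩
end

section
/- For any target current vector I ∈ ℝⁿ there exists a unique voltage vector V ∈ ℝⁿ with D V = I, where D is the impedance matrix; i.e., module voltages realizing any prescribed set of module currents exist and are unique. -/
theorem voltages_exist_unique_for_currents (n : ℕ) (Z : Fin n → ℝ) (Zl : ℝ)
    (hZ : ∀ k, 0 < Z k) (hZl : 0 < Zl)
    (S : ℝ) (hS : S = 1 / Zl + ∑ m, 1 / Z m)
    (D : Matrix (Fin n) (Fin n) ℝ)
    (hD : ∀ k j, D k j =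
      if j = k then (1 / Z k) * (S - 1 / Z k) / S
      else -(1 / Z k) * (1 / Z j) / S) :
    ∀ I : Fin n → ℝ, ∃! V : Fin n → ℝ, D.mulVec V = I := by
  have hSpos : 0 < S := by
    have h0 : 0 ≤ ∑ m, 1 / Z m :=
      Finset.sum_nonneg fun m _ => le_of_lt (by have := hZ m; positivity)
    rw [hS]
    have : 0 < 1 / Zl := by positivity
    linarith
  have hSne : S ≠ 0 := ne_of_gt hSpos
  -- kernel is trivial
  have hker : ∀ V : Fin n → ℝ, D.mulVec V = 0 → V = 0 := by
    intro V hV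
    set T := ∑ j, (1 / Z j) * V j with hT
    have key : ∀ k, (1 / Z k) * V k - (1 / Z k) * T / S = 0 := by
      intro k
      have h0 : D.mulVec V k = 0 := congrFun hV k
      have hcalc : D.mulVec V k = (1 / Z k) * V k - (1 / Z k) * T / S := by
        simp only [Matrix.mulVec, dotProduct]
        have hterm : ∀ j, D k j * V j =
            (if j = k then (1 / Z k) * V k else 0) - (1 / Z k) * (1 / Z j) * V j / S := by
          intro j
          rw [hD]
          split_ifs with h
          · subst h; have hz := (hZ j).ne'; field_simp
          · ring
        rw [Finset.sum_congr rfl fun j _ => hterm j, Finset.sum_sub_distrib,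
          Finset.sum_ite_eq' Finset.univ k (fun _ => (1 / Z k) * V k)]
        simp only [Finset.mem_univ, if_true]
        rw [hT, Finset.mul_sum, Finset.sum_div]
        congr 1
        apply Finset.sum_congr rfl
        intro j _
        ring
      rw [hcalc] at h0
      exact h0
    have hVk : ∀ k, V k = T / S := by
      intro k
      have hw : (1 / Z k) ≠ 0 := by have := hZ k; positivity
      have h1 : (1 / Z k) * (V k - T / S) = 0 := by
        have := key k; ring_nf at this ⊢; linarith
      rcases mul_eq_zero.1 h1 with h | h
      · exact absurd h hw
      · linarith
    have hTeq : T = (S - 1 / Zl) * (T / S) := by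
      have h1 : ∑ m, 1 / Z m = S - 1 / Zl := by rw [hS]; ring
      calc T = ∑ j, (1 / Z j) * (T / S) := by
              rw [hT]; exact Finset.sum_congr rfl fun j _ => by rw [hVk j]
        _ = (∑ j, 1 / Z j) * (T / S) := by rw [Finset.sum_mul]
        _ = (S - 1 / Zl) * (T / S) := by rw [h1]
    have hT0 : T = 0 := by
      have hZlne : Zl ≠ 0 := ne_of_gt hZl
      field_simp at hTeq
      linear_combination hTeq
    funext k
    rw [hVk k, hT0]
    simp
  -- injectivity of mulVec
  have hinj : Function.Injective (Matrix.mulVecLin D) := by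
    rw [← LinearMap.ker_eq_bot, LinearMap.ker_eq_bot']
    intro V hV
    exact hker V hV
  have hsurj : Function.Surjective (Matrix.mulVecLin D) :=
    (LinearMap.injective_iff_surjective).mp hinj
  intro I
  obtain ⟨V, hV⟩ := hsurj I
  refine ⟨V, hV, ?_⟩
  intro W hW
  exact hinj (show Matrix.mulVecLin D W = Matrix.mulVecLin D V from by
    simp only [Matrix.mulVecLin_apply]; rw [hW, ← hV]; rfl)
end

section
/- The inverse of the impedance matrix D has entries (D⁻¹)_{k,j} = Z_k δ_{k,j} + Z_l for all k, j; i.e., D⁻¹ = diag(Z_1,…,Z_n) + Z_l J where J is the all-ones matrix. -/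
theorem impedance_matrix_inverse (n : ℕ) (Z : Fin n → ℝ) (Zl : ℝ)
    (hZ : ∀ k, 0 < Z k) (hZl : 0 < Zl)
    (S : ℝ) (hS : S = 1 / Zl + ∑ m, 1 / Z m)
    (D : Matrix (Fin n) (Fin n) ℝ)
    (hD : ∀ k j, D k j =
      if j = k then (1 / Z k) * (S - 1 / Z k) / S
      else -(1 / Z k) * (1 / Z j) / S) :
    ∀ k j, D⁻¹ k j = (if k = j then Z k else 0) + Zl := by
  have hZ0 : ∀ k, Z k ≠ 0 := fun k => (hZ k).ne'
  have hZl0 : Zl ≠ 0 := hZl.ne'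
  have hS0 : 0 < S := by
    rw [hS]
    have h1 : 0 < 1 / Zl := by positivity
    have h2 : (0:ℝ) ≤ ∑ m, 1 / Z m :=
      Finset.sum_nonneg fun m _ => by have := hZ m; positivity
    linarith
  have hSne : S ≠ 0 := hS0.ne'
  set E : Matrix (Fin n) (Fin n) ℝ :=
    fun k j => (if k = j then Z k else 0) + Zl with hE
  have hD' : ∀ k m, D k m = -(1 / Z k) * (1 / Z m) / S +
      (if m = k then 1 / Z k else 0) := by
    intro k m
    rw [hD]
    split_ifs with h
    · subst h
      have h1 : (1 / Z m) * (S - 1 / Z m) / S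
          = (1 / Z m) * S / S - (1 / Z m) * (1 / Z m) / S := by ring
      rw [h1, mul_div_assoc, div_self hSne, mul_one]
      ring
    · simp
  have hsum : ∑ m, 1 / Z m = S - 1 / Zl := by rw [hS]; ring
  have hDE : D * E = 1 := by
    ext k j
    rw [Matrix.mul_apply, Matrix.one_apply]
    have step : ∀ m, D k m * E m j =
        (-(1 / Z k) / S * ((if m = j then Z m else 0) * (1 / Z m))
          + -(1 / Z k) / S * Zl * (1 / Z m)
          + (if m = k then (if m = j then 1 / Z k * Z m else 0) else 0)
          + (if m = k then 1 / Z k * Zl else 0)) := by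
      intro m
      rw [hD']
      simp only [hE]
      split_ifs with h1 h2 h2 <;> ring
    rw [Finset.sum_congr rfl fun m _ => step m]
    simp only [Finset.sum_add_distrib, ← Finset.mul_sum]
    rw [hsum]
    have e1 : ∑ m, ((if m = j then Z m else 0) * (1 / Z m))
        = 1 := by
      rw [Finset.sum_eq_single j]
      · simp [hZ0 j]
      · intro b _ hb; simp [hb]
      · simp
    have e2 : ∑ m, (if m = k then (if m = j then 1 / Z k * Z m else 0) else 0)
        = (if k = j then (1:ℝ) else 0) := by
      rw [Finset.sum_eq_single k]
      · simp [one_div, inv_mul_cancel₀ (hZ0 k)]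
      · intro b _ hb; simp [hb]
      · simp
    have e3 : ∑ m, (if m = k then 1 / Z k * Zl else 0) = 1 / Z k * Zl := by
      rw [Finset.sum_eq_single k] <;> simp +contextual
    rw [e1, e2, e3]
    split_ifs with h
    · subst h
      have hzk : Z k ≠ 0 := hZ0 k
      field_simp
      ring
    · have hzk : Z k ≠ 0 := hZ0 k
      have hzj : Z j ≠ 0 := hZ0 j
      field_simp
      ring
  intro k j
  rw [Matrix.inv_eq_right_inv hDE]
end
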